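/- arXiv:2302.10550 — 3 statements merged into one kernel-verified Lean document; each statement's English description precedes it below -/
import Mathlib

section
/- Let A be a C*-algebra, let Γ be a finite group, and let α be an action of Γ on A by *-automorphisms. Let A^α := {a ∈ A : α_g(a) = a for all g ∈ Γ} be the fixed point subalgebra. Suppose (h_n)_{n∈ℕ} is a sequence in A^α with 0 ≤ h_n and ‖h_n‖ ≤ 1 for all n, such that ‖h_n b − b‖ → 0 as n → ∞ for every b ∈ A^α. Then ‖h_n a − a‖ → 0 and ‖a h_n − a‖ → 0 as n → ∞ for every a ∈ A. (In other words, since Γ is finite, the inclusion A^α ⊆ A is nondegenerate: every approximate unit for A^α is an approximate unit for A.) -/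
/-!
Fix `a ∈ A` and sum the positive element `a a*` over the group: `q = ∑ g, α g (a a*)`
is fixed and dominates `a a*`. Since `(h a - a)(h a - a)* = (h - 1) a a* (h - 1)` and
conjugation by `h - 1` is monotone, the C*-identity and monotonicity of the norm on positive
elements give `‖h a - a‖² ≤ ‖(h - 1) q (h - 1)‖ ≤ 2 ‖h q - q‖ → 0`. The right-hand version
follows by taking adjoints.
-/

open Filter Topology

lemma map_sum_orbit {Γ M F : Type*} [Group Γ] [Fintype Γ] [AddCommMonoid M] [FunLike F M M]
    [AddMonoidHomClass F M M] (α : Γ → F)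
    (hmul : ∀ g g' : Γ, ∀ b : M, α (g * g') b = α g (α g' b)) (b : M) (g' : Γ) :
    α g' (∑ g, α g b) = ∑ g, α g b := by
  simp only [map_sum, ← hmul]
  exact Equiv.sum_comp (Equiv.mulLeft g') fun g => α g b

/-- `e * x * e - e * x - x * e + x` stands for `(e - 1) x (e - 1)` in a non-unital ring. -/
lemma conj_sub_one_le_conj_sub_one {R : Type*} [NonUnitalRing R] [StarRing R] [PartialOrder R]
    [StarOrderedRing R] {e x y : R} (he : IsSelfAdjoint e) (hxy : x ≤ y) :
    e * x * e - e * x - x * e + x ≤ e * y * e - e * y - y * e + y := by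
  have hd : 0 ≤ y - x := sub_nonneg.2 hxy
  rw [← sub_nonneg]
  convert_to 0 ≤ e * (y - x) * e - e * (y - x) - (y - x) * e + (y - x) using 1
  · noncomm_ring
  generalize y - x = d at hd ⊢
  rw [StarOrderedRing.nonneg_iff] at hd
  induction hd using AddSubmonoid.closure_induction with
  | mem _ hs =>
    obtain ⟨s, rfl⟩ := hs
    convert star_mul_self_nonneg (s * e - s) using 1
    rw [star_sub, star_mul, he.star_eq]
    noncomm_ring
  | zero => simp
  | add x y _ _ hx hy =>
    convert add_nonneg hx hy using 1
    noncomm_ring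

lemma norm_mul_sub_self_sq_le {A : Type*} [NonUnitalCStarAlgebra A] [PartialOrder A]
    [StarOrderedRing A] {e a q : A} (he : IsSelfAdjoint e) (he1 : ‖e‖ ≤ 1)
    (haq : a * star a ≤ q) : ‖e * a - a‖ ^ 2 ≤ 2 * ‖e * q - q‖ := by
  have hz : (e * a - a) * star (e * a - a) =
      e * (a * star a) * e - e * (a * star a) - (a * star a) * e + a * star a := by
    rw [star_sub, star_mul, he.star_eq]
    noncomm_ring
  have hq : e * q * e - e * q - q * e + q = (e * q - q) * e - (e * q - q) := by noncomm_ring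
  calc ‖e * a - a‖ ^ 2 = ‖(e * a - a) * star (e * a - a)‖ := by
        rw [CStarRing.norm_self_mul_star, sq]
    _ ≤ ‖(e * q - q) * e - (e * q - q)‖ := by
        rw [hz, ← hq]
        exact CStarAlgebra.norm_le_norm_of_nonneg_of_le (hz ▸ mul_star_self_nonneg _)
          (conj_sub_one_le_conj_sub_one he haq)
    _ ≤ ‖e * q - q‖ * ‖e‖ + ‖e * q - q‖ :=
        (norm_sub_le _ _).trans (by gcongr; exact norm_mul_le _ _)
    _ ≤ 2 * ‖e * q - q‖ := by nlinarith [norm_nonneg (e * q - q)]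

theorem stmt2_general {A : Type*} [NonUnitalNormedRing A] [StarRing A] [CStarRing A]
    [PartialOrder A] [StarOrderedRing A] [CompleteSpace A]
    [NormedSpace ℂ A] [IsScalarTower ℂ A A] [SMulCommClass ℂ A A] [StarModule ℂ A]
    {Γ : Type*} [Group Γ] [Finite Γ]
    (α : Γ → (A ≃⋆ₐ[ℂ] A))
    (hone : ∀ a : A, α 1 a = a)
    (hmul : ∀ g g' : Γ, ∀ a : A, α (g * g') a = α g (α g' a))
    (h : ℕ → A)
    (hpos : ∀ n, 0 ≤ h n)
    (hnorm : ∀ n, ‖h n‖ ≤ 1)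
    (happrox : ∀ b : A, (∀ g : Γ, α g b = b) →
      Tendsto (fun n => ‖h n * b - b‖) atTop (nhds 0)) :
    ∀ a : A, Tendsto (fun n => ‖h n * a - a‖) atTop (nhds 0) ∧
      Tendsto (fun n => ‖a * h n - a‖) atTop (nhds 0) := by
  let _ : NonUnitalCStarAlgebra A :=
    { ‹NonUnitalNormedRing A›, ‹StarRing A›, ‹CStarRing A›, ‹NormedSpace ℂ A›,
      ‹IsScalarTower ℂ A A›, ‹SMulCommClass ℂ A A›, ‹StarModule ℂ A›,
      ‹CompleteSpace A› with }
  have := Fintype.ofFinite Γ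
  have hsa (n : ℕ) : IsSelfAdjoint (h n) := (hpos n).isSelfAdjoint
  have left (a : A) : Tendsto (fun n => ‖h n * a - a‖) atTop (𝓝 0) := by
    set q := ∑ g, α g (a * star a)
    have haq : a * star a ≤ q := hone (a * star a) ▸
      Finset.single_le_sum (fun g _ => map_nonneg (α g) (mul_star_self_nonneg a))
        (Finset.mem_univ 1)
    have hsq : Tendsto (fun n => ‖h n * a - a‖ ^ 2) atTop (𝓝 0) :=
      squeeze_zero (fun n => by positivity)
        (fun n => norm_mul_sub_self_sq_le (hsa n) (hnorm n) haq)
        (by simpa using (happrox q (map_sum_orbit α hmul _)).const_mul 2)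
    simpa using hsq.sqrt
  refine fun a => ⟨left a, (left (star a)).congr fun n => ?_⟩
  rw [← norm_star, star_sub, star_mul, (hsa n).star_eq, star_star]

/-- If `Γ` is a finite group acting on a C*-algebra `A` by
*-automorphisms, then every approximate unit of the fixed point subalgebra
`A^α` is an approximate unit for `A` (the inclusion `A^α ⊆ A` is nondegenerate). -/
theorem stmt2 {A : Type*} [NonUnitalNormedRing A] [StarRing A] [CStarRing A]
    [PartialOrder A] [StarOrderedRing A] [CompleteSpace A]
    [NormedSpace ℂ A] [IsScalarTower ℂ A A] [SMulCommClass ℂ A A] [StarModule ℂ A]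
    {Γ : Type*} [Group Γ] [Finite Γ]
    (α : Γ → (A ≃⋆ₐ[ℂ] A))
    (hone : ∀ a : A, α 1 a = a)
    (hmul : ∀ g g' : Γ, ∀ a : A, α (g * g') a = α g (α g' a))
    (h : ℕ → A)
    (hfix : ∀ n, ∀ g : Γ, α g (h n) = h n)
    (hpos : ∀ n, 0 ≤ h n)
    (hnorm : ∀ n, ‖h n‖ ≤ 1)
    (happrox : ∀ b : A, (∀ g : Γ, α g b = b) →
      Tendsto (fun n => ‖h n * b - b‖) atTop (nhds 0)) :
    ∀ a : A, Tendsto (fun n => ‖h n * a - a‖) atTop (nhds 0) ∧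
      Tendsto (fun n => ‖a * h n - a‖) atTop (nhds 0) :=
  stmt2_general α hone hmul h hpos hnorm happrox
end

section
/- With the notation of the context, assume in addition that m has full support, i.e., m(η) > 0 for every η ∈ N̂. Then there exists a real number r with 0 < r < 1 such that for every character η ∈ N̂ the complex number m'_r(η) = (1/|N|) Σ_{j=0}^{n} r^{−j} Σ_{h∈N_j} Σ_{η'∈N̂} η(h) η'(−h) m(η') is a nonnegative real number. -/
/-- With `Γ = ⊕ ℤ/k_j`, `N ≤ Γ`, and a probability measure `m` with
full support on the character group of `N`, there is `0 < r < 1` such that every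
value `m'_r(η)` is a nonnegative real number. -/
theorem stmt5 (n : ℕ) (k : Fin n → ℕ) [∀ j, NeZero (k j)]
    (N : AddSubgroup (∀ j : Fin n, ZMod (k j))) [Fintype N] [Fintype (AddChar N ℂ)]
    (m : AddChar N ℂ → ℝ)
    (hm0 : ∀ η, 0 ≤ m η) (hm1 : ∑ η : AddChar N ℂ, m η = 1)
    (hfull : ∀ η, 0 < m η)
    (wt : N → ℕ)
    (hwt : ∀ h : N, wt h =
      (Finset.univ.filter fun j : Fin n => (h : ∀ j, ZMod (k j)) j ≠ 0).card)
    (m' : ℝ → AddChar N ℂ → ℂ)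
    (hm' : ∀ (r : ℝ) (η : AddChar N ℂ), m' r η =
      (Fintype.card N : ℂ)⁻¹ *
        ∑ j ∈ Finset.range (n + 1), ((r : ℂ) ^ (-(j : ℤ))) *
          ∑ h ∈ Finset.univ.filter (fun h : N => wt h = j),
            ∑ η' : AddChar N ℂ, η h * η' (-h) * (m η' : ℂ)) :
    ∃ r : ℝ, 0 < r ∧ r < 1 ∧ ∀ η : AddChar N ℂ, ∃ t : ℝ, 0 ≤ t ∧ m' r η = (t : ℂ) := by
  classical
  -- weights are invariant under negation
  have hwtneg : ∀ h : N, wt (-h) = wt h := by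
    intro h
    rw [hwt, hwt]
    congr 1
    apply Finset.filter_congr
    intro j _
    simp
  -- each value m' r η is real
  have hreal : ∀ (r : ℝ) (η : AddChar N ℂ), (starRingEnd ℂ) (m' r η) = m' r η := by
    intro r η
    rw [hm', map_mul, map_inv₀, map_natCast, map_sum]
    congr 1
    refine Finset.sum_congr rfl fun j _ => ?_
    rw [map_mul, map_zpow₀, Complex.conj_ofReal, map_sum]
    congr 1
    refine Finset.sum_equiv (Equiv.neg N) ?_ ?_
    · intro h
      simp [hwtneg]
    · intro h _
      rw [map_sum]
      refine Finset.sum_congr rfl fun η' _ => ?_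
      rw [map_mul, map_mul, Complex.conj_ofReal, ← AddChar.map_neg_eq_conj,
        ← AddChar.map_neg_eq_conj]
      simp
  -- orthogonality
  have hor : ∀ η η' : AddChar N ℂ, (∑ h : N, η h * η' (-h))
      = if η = η' then (Fintype.card N : ℂ) else 0 := by
    intro η η'
    simp_rw [← AddChar.div_apply]
    rw [AddChar.sum_eq_ite]
    have : η / η' = 0 ↔ η = η' := by
      rw [← AddChar.one_eq_zero, div_eq_one]
    simp only [this]
  -- value at r = 1
  have hone : ∀ η : AddChar N ℂ, m' 1 η = (m η : ℂ) := by
    intro η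
    rw [hm']
    simp only [Complex.ofReal_one, one_zpow, one_mul]
    rw [Finset.sum_fiberwise_of_maps_to (g := wt) (t := Finset.range (n + 1))
      (fun h _ => by
        rw [Finset.mem_range, Nat.lt_succ_iff, hwt]
        exact (Finset.card_filter_le _ _).trans (by simp))]
    rw [Finset.sum_comm]
    have : ∀ η' : AddChar N ℂ, (∑ h : N, η h * η' (-h) * (m η' : ℂ))
        = (if η = η' then (Fintype.card N : ℂ) else 0) * (m η' : ℂ) := by
      intro η'
      rw [← Finset.sum_mul, hor]
    simp only [this, ite_mul, zero_mul, Finset.sum_ite_eq, Finset.mem_univ, if_true]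
    rw [← mul_assoc, inv_mul_cancel₀ (by exact_mod_cast Fintype.card_ne_zero), one_mul]
  -- continuity of r ↦ m' r η at r = 1
  have hcont : ∀ η : AddChar N ℂ, ContinuousAt (fun r : ℝ => m' r η) 1 := by
    intro η
    have : (fun r : ℝ => m' r η) = fun r : ℝ =>
        (Fintype.card N : ℂ)⁻¹ *
        ∑ j ∈ Finset.range (n + 1), ((r : ℂ) ^ (-(j : ℤ))) *
          ∑ h ∈ Finset.univ.filter (fun h : N => wt h = j),
            ∑ η' : AddChar N ℂ, η h * η' (-h) * (m η' : ℂ) := by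
      funext r; exact hm' r η
    rw [this]
    refine continuousAt_const.mul ?_
    exact tendsto_finset_sum _ fun j _ =>
      ContinuousAt.mul
        ((continuousAt_zpow₀ ((1 : ℝ) : ℂ) (-(j : ℤ)) (Or.inl (by norm_num))).comp
          Complex.continuous_ofReal.continuousAt)
        continuousAt_const
  -- eventually positive real part
  have hev1 : ∀ᶠ r in nhdsWithin (1 : ℝ) (Set.Iio 1), 0 < r :=
    Filter.Eventually.filter_mono nhdsWithin_le_nhds (eventually_gt_nhds (by norm_num))
  have hev2 : ∀ᶠ r in nhdsWithin (1 : ℝ) (Set.Iio 1), r < 1 :=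
    eventually_mem_nhdsWithin.mono fun r hr => hr
  have hev3 : ∀ᶠ r in nhdsWithin (1 : ℝ) (Set.Iio 1),
      ∀ η : AddChar N ℂ, 0 < (m' r η).re := by
    rw [Filter.eventually_all]
    intro η
    have h1 : ContinuousAt (fun r : ℝ => (m' r η).re) 1 :=
      Complex.continuous_re.continuousAt.comp (hcont η)
    have h2 : (0 : ℝ) < (m' 1 η).re := by rw [hone]; simpa using hfull η
    have : ∀ᶠ r in nhds (1 : ℝ), (m' r η).re ∈ Set.Ioi (0 : ℝ) := h1 (Ioi_mem_nhds h2)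
    exact this.filter_mono nhdsWithin_le_nhds
  obtain ⟨r, hr0, hr1, hpos⟩ := (hev1.and (hev2.and hev3)).exists
  refine ⟨r, hr0, hr1, fun η => ⟨(m' r η).re, (hpos η).le, ?_⟩⟩
  have him : (m' r η).im = 0 := Complex.conj_eq_iff_im.mp (hreal r η)
  exact (Complex.ext (by simp) (by simp [him])).symm
end

section
/- With the notation of the context, let r > 0 be a real number and let h ∈ N be an element with |h| = i (that is, h has exactly i nonzero coordinates). Then Σ_{η∈N̂} η(−h) m'_r(η) = r^{−i} Σ_{η'∈N̂} η'(−h) m(η'). -/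
/-- With `Γ = ⊕ ℤ/k_j`, `N ≤ Γ`, and a probability measure `m` on the
character group of `N`, for `r > 0` and `h ∈ N` with exactly `i` nonzero
coordinates, one has `∑_η η(-h) m'_r(η) = r^{-i} ∑_{η'} η'(-h) m(η')`. -/
theorem stmt9 (n : ℕ) (k : Fin n → ℕ) [∀ j, NeZero (k j)]
    (N : AddSubgroup (∀ j : Fin n, ZMod (k j))) [Fintype N] [Fintype (AddChar N ℂ)]
    (m : AddChar N ℂ → ℝ)
    (hm0 : ∀ η, 0 ≤ m η) (hm1 : ∑ η : AddChar N ℂ, m η = 1)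
    (wt : N → ℕ)
    (hwt : ∀ h : N, wt h =
      (Finset.univ.filter fun j : Fin n => (h : ∀ j, ZMod (k j)) j ≠ 0).card)
    (m' : ℝ → AddChar N ℂ → ℂ)
    (hm' : ∀ (r : ℝ) (η : AddChar N ℂ), m' r η =
      (Fintype.card N : ℂ)⁻¹ *
        ∑ j ∈ Finset.range (n + 1), ((r : ℂ) ^ (-(j : ℤ))) *
          ∑ h' ∈ Finset.univ.filter (fun h' : N => wt h' = j),
            ∑ η' : AddChar N ℂ, η h' * η' (-h') * (m η' : ℂ))
    (r : ℝ) (hr : 0 < r) (i : ℕ) (h : N) (hh : wt h = i) :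
    ∑ η : AddChar N ℂ, η (-h) * m' r η =
      (r : ℂ) ^ (-(i : ℤ)) * ∑ η' : AddChar N ℂ, η' (-h) * (m η' : ℂ) := by
  classical
  have key : ∀ h' : N, (∑ η : AddChar N ℂ, η (-h) * η h') =
      if h' = h then (Fintype.card N : ℂ) else 0 := by
    intro h'
    have := AddChar.sum_apply_eq_ite (h' - h)
    simp only [sub_eq_zero] at this
    rw [← this]
    refine Finset.sum_congr ?_ fun η _ => ?_
    · congr!
    · rw [sub_eq_add_neg, AddChar.map_add_eq_mul, mul_comm]
  have hmaps : ∀ h' : N, h' ∈ (Finset.univ : Finset N) → wt h' ∈ Finset.range (n + 1) := by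
    intro h' _
    rw [Finset.mem_range, hwt, Nat.lt_succ_iff]
    exact (Finset.card_filter_le _ _).trans_eq (by simp)
  have hregroup : ∀ η : AddChar N ℂ, m' r η =
      (Fintype.card N : ℂ)⁻¹ *
        ∑ h' : N, (r : ℂ) ^ (-(wt h' : ℤ)) *
          ∑ η' : AddChar N ℂ, η h' * η' (-h') * (m η' : ℂ) := by
    intro η
    rw [hm' r η]
    congr 1
    rw [← Finset.sum_fiberwise_of_maps_to hmaps
      (fun h' => (r : ℂ) ^ (-(wt h' : ℤ)) * ∑ η' : AddChar N ℂ, η h' * η' (-h') * (m η' : ℂ))]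
    refine Finset.sum_congr rfl fun j _ => ?_
    rw [Finset.mul_sum]
    refine Finset.sum_congr rfl fun h' hh' => ?_
    rw [(Finset.mem_filter.mp hh').2]
  calc ∑ η : AddChar N ℂ, η (-h) * m' r η
      = (Fintype.card N : ℂ)⁻¹ * ∑ h' : N, (r : ℂ) ^ (-(wt h' : ℤ)) *
          ∑ η' : AddChar N ℂ, (∑ η : AddChar N ℂ, η (-h) * η h') * η' (-h') * (m η' : ℂ) := by
        simp only [hregroup, Finset.mul_sum, Finset.sum_mul]
        rw [Finset.sum_comm]
        refine Finset.sum_congr rfl fun h' _ => ?_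
        rw [Finset.sum_comm]
        refine Finset.sum_congr rfl fun η' _ => ?_
        refine Finset.sum_congr rfl fun η _ => ?_
        ring
    _ = (r : ℂ) ^ (-(i : ℤ)) * ∑ η' : AddChar N ℂ, η' (-h) * (m η' : ℂ) := by
        simp only [key]
        rw [Finset.sum_eq_single h]
        · rw [hh, if_pos rfl]
          have hcard : (Fintype.card N : ℂ) ≠ 0 := Nat.cast_ne_zero.2 Fintype.card_ne_zero
          simp only [Finset.mul_sum]
          refine (Finset.sum_congr rfl fun η' _ => ?_)
          field_simp
        · intro h' _ hne
          rw [if_neg hne]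
          simp
        · intro hmem; exact absurd (Finset.mem_univ h) hmem
end
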